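/- Follow-the-Leader is an optimal prediction rule: fix K ≥ 1, T ≥ 1 and ε ∈ (0, 1/2). For every prediction rule p : Ω → ℝ^K (with p_k(ω) ≥ 0 and ∑_{k=1}^K p_k(ω) = 1 for every ω), one has ∑_{j=1}^K E_{P_j}[p_j(ω)] ≤ ∑_{j=1}^K P_j{FTL(ω) = j}. -/

import Mathlib

open MeasureTheory

/-- The Bernoulli measure on `Bool` with success probability `p` (for `p ∈ [0,1]`). -/
noncomputable def bern (p : ℝ) : Measure Bool :=
  (PMF.bernoulli (min (Real.toNNReal p) 1) (min_le_right _ _)).toMeasure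

/-- The lower-bound instance `I_j`: the product measure on `K × T` reward matrices
under which all entries are independent, entries of row `j` are Bernoulli((1+ε)/2),
and entries of every other row are Bernoulli(1/2). -/
noncomputable def lowerP (K T : ℕ) (ε : ℝ) (j : Fin K) :
    Measure (Fin K → Fin T → Bool) :=
  Measure.pi fun k => Measure.pi fun _ : Fin T =>
    bern (if k = j then (1 + ε) / 2 else 1 / 2)

/-- The number of wins `w_k(ω) = #{t : ω_{k,t} = 1}` of arm `k`. -/
def wins {K T : ℕ} (ω : Fin K → Fin T → Bool) (k : Fin K) : ℕ :=
  (Finset.univ.filter fun t : Fin T => ω k t = true).card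

/-- The Follow-the-Leader prediction: the smallest index maximizing `w_k(ω)`. -/
noncomputable def FTL {K T : ℕ} [NeZero K] (ω : Fin K → Fin T → Bool) : Fin K :=
  (Finset.univ.filter fun k : Fin K => ∀ k', wins ω k' ≤ wins ω k).min' (by
    obtain ⟨b, -, hb⟩ :=
      Finset.exists_max_image Finset.univ (wins ω) Finset.univ_nonempty
    exact ⟨b, Finset.mem_filter.mpr
      ⟨Finset.mem_univ b, fun k' => hb k' (Finset.mem_univ k')⟩⟩)

/-!
Under `P_j` a matrix `ω` has mass `((1+ε)/2)^{w_j} ((1-ε)/2)^{T-w_j} 2^{-T(K-1)}`, which is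
increasing in `w_j(ω)`; hence `FTL ω` maximizes the likelihood `j ↦ P_j{ω}`. For any prediction
rule, `∑_j E_{P_j}[p_j] = ∑_ω ∑_j P_j{ω} p_j(ω) ≤ ∑_ω max_j P_j{ω}`, and the right-hand side is
`∑_ω P_{FTL ω}{ω} = ∑_j P_j{FTL = j}`.
-/

open Finset

instance isProbabilityMeasure_bern (q : ℝ) : IsProbabilityMeasure (bern q) :=
  PMF.toMeasure.isProbabilityMeasure _

instance isProbabilityMeasure_lowerP (K T : ℕ) (ε : ℝ) (j : Fin K) :
    IsProbabilityMeasure (lowerP K T ε j) := by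
  unfold lowerP; infer_instance

lemma bern_singleton {q : ℝ} (hq0 : 0 ≤ q) (hq1 : q ≤ 1) (b : Bool) :
    bern q {b} = ENNReal.ofReal (cond b q (1 - q)) := by
  rw [bern, PMF.toMeasure_apply_singleton _ _ (measurableSet_singleton b),
    PMF.bernoulli_apply, min_eq_left (Real.toNNReal_le_one.mpr hq1)]
  cases b with
  | false =>
    simp only [cond_false, ENNReal.coe_sub, ENNReal.coe_one, ENNReal.ofReal_sub _ hq0,
      ENNReal.ofReal_one]
    rfl
  | true => rfl

lemma bern_half_singleton (b : Bool) : bern (1 / 2) {b} = ENNReal.ofReal (1 / 2) := by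
  rw [bern_singleton (by norm_num) (by norm_num)]
  cases b <;> norm_num

lemma pi_bern_singleton {ι : Type*} [Fintype ι] {q : ℝ} (hq0 : 0 ≤ q) (hq1 : q ≤ 1)
    (r : ι → Bool) :
    (Measure.pi fun _ : ι => bern q) {r}
      = ENNReal.ofReal q ^ #{i | r i = true} * ENNReal.ofReal (1 - q) ^ #{i | ¬r i = true} := by
  simp only [Measure.pi_singleton, bern_singleton hq0 hq1, ← prod_const]
  rw [← prod_ite]
  refine prod_congr rfl fun i _ => ?_
  cases r i <;> rfl

lemma card_filter_not_true_eq {T : ℕ} (r : Fin T → Bool) :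
    #{t | ¬r t = true} = T - #{t | r t = true} := by
  have := card_filter_add_card_filter_not (s := univ) (fun t => r t = true)
  rw [card_univ, Fintype.card_fin] at this
  omega

lemma lowerP_singleton {K T : ℕ} {ε : ℝ} (hε0 : 0 ≤ ε) (hε1 : ε ≤ 1)
    (j : Fin K) (ω : Fin K → Fin T → Bool) :
    lowerP K T ε j {ω}
      = ENNReal.ofReal ((1 + ε) / 2) ^ wins ω j * ENNReal.ofReal ((1 - ε) / 2) ^ (T - wins ω j)
        * (ENNReal.ofReal (1 / 2) ^ T) ^ (K - 1) := by
  rw [lowerP, Measure.pi_singleton, ← mul_prod_erase univ _ (mem_univ j), if_pos rfl,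
    pi_bern_singleton (by linarith) (by linarith), card_filter_not_true_eq,
    show 1 - (1 + ε) / 2 = (1 - ε) / 2 by ring]
  congr 1
  rw [prod_congr rfl fun k hk => by rw [if_neg (ne_of_mem_erase hk)]]
  simp only [Measure.pi_singleton, bern_half_singleton, prod_const, card_univ, Fintype.card_fin,
    card_erase_of_mem (mem_univ j)]

lemma pow_mul_pow_le_pow_mul_pow {R : Type*} [CommSemiring R] [PartialOrder R] [IsOrderedRing R]
    {x y : R} (hy : 0 ≤ y) (hyx : y ≤ x) {a b c d : ℕ} (hac : a ≤ c) (h : a + b = c + d) :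
    x ^ a * y ^ b ≤ x ^ c * y ^ d := by
  obtain ⟨e, rfl⟩ := Nat.exists_eq_add_of_le hac
  obtain rfl : b = e + d := by omega
  have hx : 0 ≤ x := hy.trans hyx
  calc x ^ a * y ^ (e + d) = x ^ a * y ^ e * y ^ d := by rw [pow_add, mul_assoc]
    _ ≤ x ^ a * x ^ e * y ^ d := by gcongr
    _ = x ^ (a + e) * y ^ d := by rw [pow_add]

lemma wins_le {K T : ℕ} (ω : Fin K → Fin T → Bool) (k : Fin K) : wins ω k ≤ T :=
  (card_filter_le _ _).trans (card_fin T).le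

lemma lowerP_singleton_le_of_wins_le {K T : ℕ} {ε : ℝ} (hε0 : 0 ≤ ε) (hε1 : ε ≤ 1)
    {ω : Fin K → Fin T → Bool} {j k : Fin K} (hjk : wins ω j ≤ wins ω k) :
    lowerP K T ε j {ω} ≤ lowerP K T ε k {ω} := by
  rw [lowerP_singleton hε0 hε1, lowerP_singleton hε0 hε1]
  gcongr ?_ * _
  exact pow_mul_pow_le_pow_mul_pow zero_le (ENNReal.ofReal_le_ofReal (by linarith)) hjk
    (by have := wins_le ω j; have := wins_le ω k; omega)

lemma wins_le_wins_FTL {K T : ℕ} [NeZero K] (ω : Fin K → Fin T → Bool) (k : Fin K) :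
    wins ω k ≤ wins ω (FTL ω) := by
  have hmem := min'_mem (univ.filter fun k : Fin K => ∀ k', wins ω k' ≤ wins ω k)
  exact (mem_filter.mp (hmem _)).2 k

section MaximumLikelihood

variable {Ω ι : Type*} [Fintype Ω] [MeasurableSpace Ω] [MeasurableSingletonClass Ω] [Fintype ι]
  {μ : ι → Measure Ω} [∀ j, IsFiniteMeasure (μ j)]

lemma sum_measureReal_fiber_eq [DecidableEq ι] (f : Ω → ι) :
    ∑ j, (μ j).real {ω | f ω = j} = ∑ ω, (μ (f ω)).real {ω} := by
  rw [← sum_fiberwise univ f fun ω => (μ (f ω)).real {ω}]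
  refine sum_congr rfl fun j _ => ?_
  rw [← coe_filter_univ, ← sum_measureReal_singleton]
  exact sum_congr rfl fun ω hω => by rw [(mem_filter.mp hω).2]

lemma sum_integral_le_sum_measureReal_of_forall_le {f : Ω → ι}
    (hf : ∀ ω j, μ j {ω} ≤ μ (f ω) {ω}) {p : Ω → ι → ℝ}
    (hp0 : ∀ ω j, 0 ≤ p ω j) (hp1 : ∀ ω, ∑ j, p ω j ≤ 1) :
    ∑ j, ∫ ω, p ω j ∂μ j ≤ ∑ j, (μ j).real {ω | f ω = j} := by
  classical
  simp_rw [integral_fintype Integrable.of_finite, smul_eq_mul]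
  rw [sum_comm, sum_measureReal_fiber_eq]
  refine sum_le_sum fun ω _ => ?_
  calc ∑ j, (μ j).real {ω} * p ω j ≤ ∑ j, (μ (f ω)).real {ω} * p ω j :=
        sum_le_sum fun j _ => mul_le_mul_of_nonneg_right
          (ENNReal.toReal_mono (measure_ne_top _ _) (hf ω j)) (hp0 ω j)
    _ = (μ (f ω)).real {ω} * ∑ j, p ω j := (mul_sum ..).symm
    _ ≤ (μ (f ω)).real {ω} := mul_le_of_le_one_right measureReal_nonneg (hp1 ω)

end MaximumLikelihood

theorem FTL_optimal_general
    (K T : ℕ) [NeZero K]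
    (ε : ℝ) (hε : 0 < ε) (hε2 : ε < 1 / 2)
    (p : (Fin K → Fin T → Bool) → Fin K → ℝ)
    (hp0 : ∀ ω k, 0 ≤ p ω k) (hp1 : ∀ ω, ∑ k, p ω k = 1) :
    (∑ j, ∫ ω, p ω j ∂(lowerP K T ε j))
      ≤ ∑ j, ((lowerP K T ε j) {ω | FTL ω = j}).toReal :=
  sum_integral_le_sum_measureReal_of_forall_le
    (fun ω j => lowerP_singleton_le_of_wins_le hε.le (by linarith) (wins_le_wins_FTL ω j))
    hp0 fun ω => (hp1 ω).le

/-- **Follow-the-Leader is an optimal prediction rule.** For every `K ≥ 1`, `T ≥ 1`,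
`ε ∈ (0, 1/2)` and every prediction rule `p`,
`∑_j E_{P_j}[p_j(ω)] ≤ ∑_j P_j{FTL(ω) = j}`. -/
theorem FTL_optimal
    (K T : ℕ) [NeZero K] (hT : 1 ≤ T)
    (ε : ℝ) (hε : 0 < ε) (hε2 : ε < 1 / 2)
    (p : (Fin K → Fin T → Bool) → Fin K → ℝ)
    (hp0 : ∀ ω k, 0 ≤ p ω k) (hp1 : ∀ ω, ∑ k, p ω k = 1) :
    (∑ j, ∫ ω, p ω j ∂(lowerP K T ε j))
      ≤ ∑ j, ((lowerP K T ε j) {ω | FTL ω = j}).toReal :=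
  FTL_optimal_general K T ε hε hε2 p hp0 hp1
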